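/- Let G be a balanced digraph of height n with level function lvl, and let 0 ≤ i < n. Let Q = Q_{[k]∖{i}} be the path obtained from the directed path P_n = 0→1→⋯→n by replacing the edge i→i+1 with a zigzag i→(i+1)'←i'→i+1 (which has the same heights). The map φ: V(G) → {0,1,…,n} given by φ(v) = lvl(v) is a homomorphism from G to P_n; moreover, G is homomorphic to Q if and only if there is no directed path u_1→u_2→u_3→u_4 in G with lvl(u_1) = i−1. -/

import Mathlib

def QV19 (n : ℕ) : Type := Fin (n + 1) ⊕ Fin 2

def QE19 (n i : ℕ) : QV19 n → QV19 n → Prop := fun x y =>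
  (∃ j : ℕ, j < n ∧ j ≠ i ∧ ∃ hj : j < n + 1, ∃ hj1 : j + 1 < n + 1,
      x = Sum.inl ⟨j, hj⟩ ∧ y = Sum.inl ⟨j + 1, hj1⟩) ∨
  (∃ hi : i < n + 1, x = Sum.inl ⟨i, hi⟩ ∧ y = Sum.inr 0) ∨
  (x = Sum.inr 1 ∧ y = Sum.inr 0) ∨
  (∃ hi1 : i + 1 < n + 1, x = Sum.inr 1 ∧ y = Sum.inl ⟨i + 1, hi1⟩)

def hQ19 (n i : ℕ) : QV19 n → ℕ := fun x =>
  Sum.elim (fun j => j.val) (fun k => if k = 0 then i + 1 else i) x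

lemma hQ19_le (n i : ℕ) (hin : i < n) (x : QV19 n) : hQ19 n i x ≤ n := by
  rcases x with j | k
  · exact Nat.lt_succ_iff.mp j.isLt
  · simp only [hQ19, Sum.elim_inr]; split <;> omega

lemma hQ19_step (n i : ℕ) (x y : QV19 n) (h : QE19 n i x y) :
    hQ19 n i y = hQ19 n i x + 1 := by
  rcases h with ⟨j, hj, hji, h1, h2, rfl, rfl⟩ | ⟨hi, rfl, rfl⟩ | ⟨rfl, rfl⟩ | ⟨h1, rfl, rfl⟩ <;>
    simp [hQ19]

/-- For a balanced digraph G all of whose components have height exactly n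
    (levels given by lvl, each component containing a level-0 and a level-n
    vertex): the level map is a homomorphism onto the directed path
    0→1→⋯→n, and G maps homomorphically to the path Q with a zigzag at
    position i iff G has no directed 3-edge path u1→u2→u3→u4 starting at а
    vertex u1 of level i−1 (expressed as lvl u1 + 1 = i). -/
theorem stmt19 {V : Type*} (E : V → V → Prop) (lvl : V → ℕ) (n i : ℕ)
    (hin : i < n)
    (hlvl : ∀ a b, E a b → lvl b = lvl a + 1)
    (hle : ∀ x, lvl x ≤ n)
    (hcomp : ∀ x : V,
      (∃ u, Relation.ReflTransGen (fun a b => E a b ∨ E b a) x u ∧ lvl u = 0) ∧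
      (∃ w, Relation.ReflTransGen (fun a b => E a b ∨ E b a) x w ∧ lvl w = n)) :
    (∀ a b, E a b → lvl b = lvl a + 1 ∧ lvl b ≤ n) ∧
    ((∃ φ : V → QV19 n, ∀ a b, E a b → QE19 n i (φ a) (φ b)) ↔
      ¬ ∃ u1 u2 u3 u4, E u1 u2 ∧ E u2 u3 ∧ E u3 u4 ∧ lvl u1 + 1 = i) := by
  classical
  refine ⟨fun a b hab => ⟨hlvl a b hab, hle b⟩, ?_, ?_⟩
  · -- forward: a homomorphism rules out the 3-edge path
    rintro ⟨φ, hφ⟩ ⟨u1, u2, u3, u4, e12, e23, e34, hl1⟩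
    -- levels are forced: hQ ∘ φ = lvl on the component of u1
    have const : ∀ x y, Relation.ReflTransGen (fun a b => E a b ∨ E b a) x y →
        (lvl x : ℤ) - hQ19 n i (φ x) = (lvl y : ℤ) - hQ19 n i (φ y) := by
      intro x y h
      induction h with
      | refl => rfl
      | tail _ hstep ih =>
        rename_i b c _
        rcases hstep with h | h
        · have h1 := hlvl _ _ h
          have h2 := hQ19_step n i _ _ (hφ _ _ h)
          rw [ih]; push_cast [h1, h2]; ring
        · have h1 := hlvl _ _ h
          have h2 := hQ19_step n i _ _ (hφ _ _ h)
          rw [ih]; push_cast [h1, h2]; ring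
    obtain ⟨⟨u, hu, hu0⟩, ⟨w, hw, hwn⟩⟩ := hcomp u1
    have h1 := const _ _ hu
    have h2 := const _ _ hw
    have hun := hQ19_le n i hin (φ u)
    have hwn' := hQ19_le n i hin (φ w)
    have heq : hQ19 n i (φ u1) = lvl u1 := by omega
    -- φ u2 has height i and an incoming edge, hence φ u2 = inl i
    have h2step := hQ19_step n i _ _ (hφ _ _ e12)
    have hφ2 : φ u2 = Sum.inl ⟨i, by omega⟩ := by
      rcases hφ _ _ e12 with ⟨j, hj, hji, ha, hb, hx, hy⟩ | ⟨hi', hx, hy⟩ |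
          ⟨hx, hy⟩ | ⟨hi1, hx, hy⟩
      · have : hQ19 n i (φ u2) = j + 1 := by rw [hy]; rfl
        have hj1 : j + 1 = i := by omega
        exact hy.trans (congrArg Sum.inl (Fin.ext (by simp [hj1])))
      · -- φ u2 = inr 0 has height i+1 ≠ i, contradiction
        exfalso
        have : hQ19 n i (φ u2) = i + 1 := by rw [hy]; rfl
        omega
      · exfalso
        have : hQ19 n i (φ u2) = i + 1 := by rw [hy]; rfl
        omega
      · exfalso
        have : hQ19 n i (φ u2) = i + 1 := by rw [hy]; simp [hQ19]
        omega
    -- then φ u3 = inr 0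
    have hφ3 : φ u3 = Sum.inr 0 := by
      rcases hφ _ _ e23 with ⟨j, hj, hji, ha, hb, hx, hy⟩ | ⟨hi', hx, hy⟩ |
          ⟨hx, hy⟩ | ⟨hi1, hx, hy⟩
      · exfalso
        rw [hφ2] at hx
        have : j = i := by
          have := Sum.inl.inj hx
          exact (Fin.mk.inj_iff.mp this.symm)
        exact hji this
      · exact hy
      · exfalso; rw [hφ2] at hx; exact absurd hx (by simp)
      · exfalso; rw [hφ2] at hx; exact absurd hx (by simp)
    -- but inr 0 has no outgoing edge
    rcases hφ _ _ e34 with ⟨j, hj, hji, ha, hb, hx, hy⟩ | ⟨hi', hx, hy⟩ |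
        ⟨hx, hy⟩ | ⟨hi1, hx, hy⟩ <;> rw [hφ3] at hx
    · exact absurd hx (by simp)
    · exact absurd hx (by simp)
    · exact absurd (Sum.inr.inj hx) (by decide)
    · exact absurd (Sum.inr.inj hx) (by decide)
  · -- backward: construct the homomorphism
    intro hno
    refine ⟨fun v => (
      if lvl v = i then (if ∃ u, E u v then Sum.inl ⟨i, by omega⟩ else Sum.inr 1)
      else if lvl v = i + 1 then
        (if ∃ w, E v w then Sum.inl ⟨i + 1, by omega⟩ else Sum.inr 0)
      else Sum.inl ⟨lvl v, by have := hle v; omega⟩ : Fin (n + 1) ⊕ Fin 2), ?_⟩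
    intro a b hab
    have hb := hlvl a b hab
    have hbn := hle b
    beta_reduce
    split_ifs with h1 h2 h3 h4 h5 h6 h7 h8 h9 h10 h11 h12 h13 h14 h15 h16 h17 h18 <;>
      first
      | omega
      | (exact absurd (⟨b, hab⟩ : ∃ w, E a w) (by assumption))
      | (exact absurd (⟨a, hab⟩ : ∃ u, E u b) (by assumption))
      | skip
    all_goals unfold QE19
    · -- lvl a = i with in-edge, b = inl (i+1): forbidden path
      obtain ⟨u, hu⟩ := h2
      obtain ⟨w, hw'⟩ := h6
      exact absurd ⟨u, a, b, w, hu, hab, hw', by have := hlvl _ _ hu; omega⟩ hno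
    · exact Or.inr (Or.inl ⟨by omega, rfl, rfl⟩)
    · exact Or.inr (Or.inr (Or.inr ⟨by omega, rfl, rfl⟩))
    · exact Or.inr (Or.inr (Or.inl ⟨rfl, rfl⟩))
    · refine Or.inl ⟨i + 1, by omega, by omega, by omega, by omega,
        congrArg Sum.inl (Fin.ext (by simp <;> omega)), congrArg Sum.inl (Fin.ext (by simp <;> omega))⟩
    · refine Or.inl ⟨lvl a, by omega, by omega, by omega, by omega, rfl,
        congrArg Sum.inl (Fin.ext (by simp <;> omega))⟩
    · refine Or.inl ⟨lvl a, by omega, by omega, by omega, by omega, rfl,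
        congrArg Sum.inl (Fin.ext (by simp <;> omega))⟩
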